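/- arXiv:1802.03496 — 2 statements merged into one kernel-verified Lean document; each statement's English description precedes it below -/
import Mathlib

section
/- Let ζ_1, ζ_2, ... be i.i.d. standard normal random variables and set M_n := max_{1≤i≤n} ζ_i. Then M_n/√(2 ln n) converges to 1 in probability as n → ∞. -/
/-! Write `M n = max_{i ≤ n} ζ i` and `c n = √(2 log n)`. A union bound with the Gaussian
Chernoff bound `P(ζ ≥ t) ≤ e^{-t²/2}` gives `P(M n ≥ a c n) ≤ n ^ (1 - a²) → 0` for `a > 1`.
By independence, `P(M n ≤ a c n) = P(ζ ≤ a c n) ^ n ≤ exp (-n P(ζ > a c n))`, and for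
`0 ≤ a < 1` the density bound `P(ζ > t) ≥ φ(t + 1)` makes `n P(ζ > a c n)` grow like a positive
power of `n`. -/

open MeasureTheory ProbabilityTheory Real Filter

open Set Topology
open scoped NNReal

section FinsetSup

variable {ι : Type*} {s : Finset ι}

lemma Finset.le_ciSup₂_of_mem {α : Type*} [ConditionallyCompleteLattice α] {f : ι → α} {i : ι}
    (hi : i ∈ s) : f i ≤ ⨆ j ∈ s, f j := by
  have : Nonempty α := ⟨f i⟩
  refine le_ciSup₂ (f := fun j (_ : j ∈ s) => f j) ?_ i hi
  refine (s.finite_toSet.image f).bddAbove.mono ?_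
  intro x hx
  simp only [mem_iUnion] at hx
  obtain ⟨j, hj, rfl⟩ := hx
  exact ⟨j, hj, rfl⟩

-- Indices outside `s` contribute `sSup ∅ = 0` to the real `⨆ j ∈ s`, hence `0 < t`.
lemma Finset.exists_le_of_le_biSup_real {f : ι → ℝ} {t : ℝ} (ht : 0 < t) (h : t ≤ ⨆ j ∈ s, f j) :
    ∃ i ∈ s, t ≤ f i := by
  have hnonneg : ∃ i ∈ s, sSup ∅ ≤ f i := by
    by_contra! hneg
    exact (ht.trans_le h).not_ge <| Real.iSup_nonpos fun i => Real.iSup_nonpos fun hi => by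
      simpa using (hneg i hi).le
  obtain ⟨i, hi, hmax⟩ := Finset.mem_image.1 (s.ciSup_mem_image f hnonneg)
  exact ⟨i, hi, hmax ▸ h⟩

end FinsetSup

section IdenticallyDistributed

variable {ι Ω : Type*} [MeasurableSpace Ω] {μ : Measure Ω} {ζ : ι → Ω → ℝ} {ν : Measure ℝ}

lemma measure_preimage_eq_of_map_eq {X : Ω → ℝ} (hX : Measurable X) (hlaw : μ.map X = ν)
    {A : Set ℝ} (hA : MeasurableSet A) : μ (X ⁻¹' A) = ν A := by
  rw [← hlaw, Measure.map_apply hX hA]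

lemma measure_exists_ge_le_card_mul (hmeas : ∀ i, Measurable (ζ i))
    (hlaw : ∀ i, μ.map (ζ i) = ν) (s : Finset ι) (t : ℝ) :
    μ {ω | ∃ i ∈ s, t ≤ ζ i ω} ≤ s.card * ν (Ici t) := by
  have hunion : {ω | ∃ i ∈ s, t ≤ ζ i ω} = ⋃ i ∈ s, ζ i ⁻¹' Ici t := by ext; simp
  calc μ {ω | ∃ i ∈ s, t ≤ ζ i ω} ≤ ∑ i ∈ s, μ (ζ i ⁻¹' Ici t) :=
        hunion ▸ measure_biUnion_finset_le _ _
    _ = s.card * ν (Ici t) := by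
        simp only [measure_preimage_eq_of_map_eq (hmeas _) (hlaw _) measurableSet_Ici,
          Finset.sum_const, nsmul_eq_mul]

lemma ProbabilityTheory.iIndepFun.measure_forall_le_eq_pow (hmeas : ∀ i, Measurable (ζ i))
    (hindep : iIndepFun ζ μ) (hlaw : ∀ i, μ.map (ζ i) = ν) (s : Finset ι) (t : ℝ) :
    μ {ω | ∀ i ∈ s, ζ i ω ≤ t} = ν (Iic t) ^ s.card := by
  have hinter : {ω | ∀ i ∈ s, ζ i ω ≤ t} = ⋂ i ∈ s, ζ i ⁻¹' Iic t := by ext; simp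
  rw [hinter, hindep.meas_biInter fun i _ => ⟨Iic t, measurableSet_Iic, rfl⟩]
  simp only [measure_preimage_eq_of_map_eq (hmeas _) (hlaw _) measurableSet_Iic, Finset.prod_const]

lemma measure_Iic_pow_le_exp [IsProbabilityMeasure ν] (t : ℝ) (n : ℕ) :
    ν (Iic t) ^ n ≤ ENNReal.ofReal (exp (-(n * ν.real (Ioi t)))) := by
  have hcompl : ν.real (Iic t) = 1 - ν.real (Ioi t) := by
    rw [← compl_Ioi, probReal_compl_eq_one_sub measurableSet_Ioi]
  rw [← ofReal_measureReal, ← ENNReal.ofReal_pow measureReal_nonneg, hcompl, ← mul_neg,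
    Real.exp_nat_mul]
  gcongr
  · linarith [measureReal_nonneg (μ := ν) (s := Iic t)]
  · exact one_sub_le_exp_neg _

end IdenticallyDistributed

section GaussianTail

lemma hasSubgaussianMGF_id_gaussianReal (v : ℝ≥0) : HasSubgaussianMGF id v (gaussianReal 0 v) where
  integrable_exp_mul t := integrable_exp_mul_gaussianReal t
  mgf_le t := by simp [mgf_id_gaussianReal]

lemma gaussianReal_Ici_le_exp (v : ℝ≥0) {t : ℝ} (ht : 0 ≤ t) :
    gaussianReal 0 v (Ici t) ≤ ENNReal.ofReal (exp (-t ^ 2 / (2 * v))) := by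
  rw [← ofReal_measureReal]
  exact ENNReal.ofReal_le_ofReal ((hasSubgaussianMGF_id_gaussianReal v).measure_ge_le ht)

lemma gaussianPDFReal_zero_one (x : ℝ) :
    gaussianPDFReal 0 1 x = (√(2 * π))⁻¹ * exp (-x ^ 2 / 2) := by
  simp [gaussianPDFReal]

lemma gaussianPDFReal_zero_one_add_one_le {t x : ℝ} (ht : 0 ≤ t) (hx : x ∈ Ioc t (t + 1)) :
    (√(2 * π))⁻¹ * exp (-(t + 1) ^ 2 / 2) ≤ gaussianPDFReal 0 1 x := by
  rw [gaussianPDFReal_zero_one]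
  gcongr
  · linarith [hx.1]
  · exact hx.2

lemma le_gaussianReal_real_Ioi {t : ℝ} (ht : 0 ≤ t) :
    (√(2 * π))⁻¹ * exp (-(t + 1) ^ 2 / 2) ≤ (gaussianReal 0 1).real (Ioi t) := by
  calc (√(2 * π))⁻¹ * exp (-(t + 1) ^ 2 / 2)
      = (√(2 * π))⁻¹ * exp (-(t + 1) ^ 2 / 2) * volume.real (Ioc t (t + 1)) := by simp
    _ ≤ ∫ x in Ioc t (t + 1), gaussianPDFReal 0 1 x :=
        setIntegral_ge_of_const_le_real measurableSet_Ioc measure_Ioc_lt_top.ne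
          (fun x hx => gaussianPDFReal_zero_one_add_one_le ht hx)
          (integrable_gaussianPDFReal 0 1).integrableOn
    _ = (gaussianReal 0 1).real (Ioc t (t + 1)) := by
        rw [measureReal_def, gaussianReal_apply_eq_integral 0 one_ne_zero,
          ENNReal.toReal_ofReal (setIntegral_nonneg measurableSet_Ioc
            fun x _ => gaussianPDFReal_nonneg 0 1 x)]
    _ ≤ (gaussianReal 0 1).real (Ioi t) := measureReal_mono Ioc_subset_Ioi_self

end GaussianTail

section SqrtTwoLog

lemma mul_exp_neg_sq_mul_sqrt_two_log (a : ℝ) {x : ℝ} (hx : 1 ≤ x) :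
    x * exp (-(a * √(2 * log x)) ^ 2 / 2) = exp ((1 - a ^ 2) * log x) := by
  have hlog : 0 ≤ 2 * log x := by linarith [log_nonneg hx]
  rw [mul_pow, sq_sqrt hlog, show (1 - a ^ 2) * log x = log x + -(a ^ 2 * (2 * log x)) / 2 by ring,
    exp_add, exp_log (by linarith)]

lemma sqrt_two_log_natCast_pos {n : ℕ} (hn : 2 ≤ n) : 0 < √(2 * log n) := by
  have := log_pos (by exact_mod_cast hn : (1 : ℝ) < n)
  positivity

lemma tendsto_sqrt_two_log_natCast_atTop : Tendsto (fun n : ℕ => √(2 * log n)) atTop atTop :=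
  tendsto_sqrt_atTop.comp <|
    (tendsto_log_atTop.comp tendsto_natCast_atTop_atTop).const_mul_atTop two_pos

lemma tendsto_exp_mul_log_natCast_nhds_zero {k : ℝ} (hk : k < 0) :
    Tendsto (fun n : ℕ => exp (k * log n)) atTop (𝓝 0) :=
  tendsto_exp_atBot.comp <|
    (tendsto_log_atTop.comp tendsto_natCast_atTop_atTop).const_mul_atTop_of_neg hk

lemma tendsto_exp_mul_log_natCast_atTop {k : ℝ} (hk : 0 < k) :
    Tendsto (fun n : ℕ => exp (k * log n)) atTop atTop :=
  tendsto_exp_atTop.comp <|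
    (tendsto_log_atTop.comp tendsto_natCast_atTop_atTop).const_mul_atTop hk

lemma tendsto_natCast_mul_gaussianReal_real_Ioi_atTop {a : ℝ} (ha₀ : 0 ≤ a) (ha₁ : a < 1) :
    Tendsto (fun n : ℕ => n * (gaussianReal 0 1).real (Ioi (a * √(2 * log n)))) atTop atTop := by
  set b := (1 + a) / 2 with hb
  have hb₀ : 0 ≤ b := by linarith
  have hb₁ : b < 1 := by linarith
  have hgap : ∀ᶠ n : ℕ in atTop, a * √(2 * log n) + 1 ≤ b * √(2 * log n) := by
    filter_upwards [tendsto_sqrt_two_log_natCast_atTop.eventually_ge_atTop (2 / (1 - a))]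
      with n hn
    have : 2 ≤ (1 - a) * √(2 * log n) := by rwa [div_le_iff₀' (by linarith)] at hn
    rw [hb]
    linarith
  refine tendsto_atTop_mono' atTop ?_ <|
    (tendsto_exp_mul_log_natCast_atTop (k := 1 - b ^ 2) (by nlinarith)).const_mul_atTop
      (by positivity : 0 < (√(2 * π))⁻¹)
  filter_upwards [hgap, eventually_ge_atTop 1] with n hgap hn
  have hn : (1 : ℝ) ≤ n := by exact_mod_cast hn
  calc (√(2 * π))⁻¹ * exp ((1 - b ^ 2) * log n)
      = n * ((√(2 * π))⁻¹ * exp (-(b * √(2 * log n)) ^ 2 / 2)) := by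
        rw [mul_left_comm, mul_exp_neg_sq_mul_sqrt_two_log b hn]
    _ ≤ n * ((√(2 * π))⁻¹ * exp (-(a * √(2 * log n) + 1) ^ 2 / 2)) := by
        gcongr
    _ ≤ n * (gaussianReal 0 1).real (Ioi (a * √(2 * log n))) := by
        gcongr
        exact le_gaussianReal_real_Ioi (by positivity)

end SqrtTwoLog

section GaussianMaximum

variable {Ω : Type*} [MeasurableSpace Ω] {μ : Measure Ω} {ζ : ℕ → Ω → ℝ}

lemma tendsto_measure_mul_sqrt_two_log_le_biSup (hmeas : ∀ i, Measurable (ζ i))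
    (hlaw : ∀ i, μ.map (ζ i) = gaussianReal 0 1) {a : ℝ} (ha : 1 < a) :
    Tendsto (fun n : ℕ => μ {ω | a * √(2 * log n) ≤ ⨆ i ∈ Finset.Icc 1 n, ζ i ω})
      atTop (𝓝 0) := by
  have hbound : ∀ᶠ n : ℕ in atTop, μ {ω | a * √(2 * log n) ≤ ⨆ i ∈ Finset.Icc 1 n, ζ i ω} ≤
      ENNReal.ofReal (exp ((1 - a ^ 2) * log n)) := by
    filter_upwards [eventually_ge_atTop 2] with n hn
    set t := a * √(2 * log n)
    have ht : 0 < t := mul_pos (by linarith) (sqrt_two_log_natCast_pos hn)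
    calc μ {ω | t ≤ ⨆ i ∈ Finset.Icc 1 n, ζ i ω}
        ≤ μ {ω | ∃ i ∈ Finset.Icc 1 n, t ≤ ζ i ω} :=
          measure_mono fun ω hω => Finset.exists_le_of_le_biSup_real ht hω
      _ ≤ n * gaussianReal 0 1 (Ici t) := by
          simpa using measure_exists_ge_le_card_mul hmeas hlaw (Finset.Icc 1 n) t
      _ ≤ n * ENNReal.ofReal (exp (-t ^ 2 / 2)) := by
          gcongr
          simpa using gaussianReal_Ici_le_exp 1 ht.le
      _ = ENNReal.ofReal (exp ((1 - a ^ 2) * log n)) := by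
          rw [← ENNReal.ofReal_natCast, ← ENNReal.ofReal_mul n.cast_nonneg,
            mul_exp_neg_sq_mul_sqrt_two_log a (by exact_mod_cast (by omega : 1 ≤ n))]
  have hlim := ENNReal.tendsto_ofReal (tendsto_exp_mul_log_natCast_nhds_zero (k := 1 - a ^ 2)
    (by nlinarith))
  rw [ENNReal.ofReal_zero] at hlim
  exact tendsto_of_tendsto_of_tendsto_of_le_of_le' tendsto_const_nhds hlim
    (Eventually.of_forall fun _ => zero_le) hbound

lemma tendsto_measure_biSup_le_mul_sqrt_two_log (hmeas : ∀ i, Measurable (ζ i))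
    (hindep : iIndepFun ζ μ) (hlaw : ∀ i, μ.map (ζ i) = gaussianReal 0 1) {a : ℝ}
    (ha₀ : 0 ≤ a) (ha₁ : a < 1) :
    Tendsto (fun n : ℕ => μ {ω | ⨆ i ∈ Finset.Icc 1 n, ζ i ω ≤ a * √(2 * log n)})
      atTop (𝓝 0) := by
  have hbound : ∀ n : ℕ, μ {ω | ⨆ i ∈ Finset.Icc 1 n, ζ i ω ≤ a * √(2 * log n)} ≤
      ENNReal.ofReal (exp (-(n * (gaussianReal 0 1).real (Ioi (a * √(2 * log n)))))) := by
    intro n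
    set t := a * √(2 * log n)
    calc μ {ω | ⨆ i ∈ Finset.Icc 1 n, ζ i ω ≤ t}
        ≤ μ {ω | ∀ i ∈ Finset.Icc 1 n, ζ i ω ≤ t} :=
          measure_mono fun ω hω i hi => (Finset.le_ciSup₂_of_mem (f := (ζ · ω)) hi).trans hω
      _ = gaussianReal 0 1 (Iic t) ^ n := by
          simpa using hindep.measure_forall_le_eq_pow hmeas hlaw (Finset.Icc 1 n) t
      _ ≤ _ := measure_Iic_pow_le_exp t n
  have hlim := ENNReal.tendsto_ofReal <| tendsto_exp_neg_atTop_nhds_zero.comp <|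
    tendsto_natCast_mul_gaussianReal_real_Ioi_atTop ha₀ ha₁
  rw [ENNReal.ofReal_zero] at hlim
  exact tendsto_of_tendsto_of_tendsto_of_le_of_le tendsto_const_nhds hlim (fun _ => zero_le)
    hbound

end GaussianMaximum

lemma add_mul_le_or_le_max_mul_of_le_abs_div_sub_one {x c ε : ℝ} (hc : 0 < c)
    (h : ε ≤ |x / c - 1|) : (1 + ε) * c ≤ x ∨ x ≤ max (1 - ε) 0 * c := by
  rcases le_abs'.1 h with h | h
  · right
    calc x = x / c * c := (div_mul_cancel₀ x hc.ne').symm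
      _ ≤ max (1 - ε) 0 * c := by gcongr; exact le_max_of_le_left (by linarith)
  · left
    calc (1 + ε) * c ≤ x / c * c := by gcongr; linarith
      _ = x := div_mul_cancel₀ x hc.ne'

theorem max_gaussian_ratio_tendsto_one_in_probability_general
    {Ω : Type*} [MeasurableSpace Ω] (μ : Measure Ω)
    (ζ : ℕ → Ω → ℝ)
    (hmeas : ∀ i, Measurable (ζ i))
    (hindep : iIndepFun ζ μ)
    (hlaw : ∀ i, Measure.map (ζ i) μ = gaussianReal 0 1) :
    TendstoInMeasure μ
      (fun n ω => (⨆ i ∈ Finset.Icc 1 n, ζ i ω) / Real.sqrt (2 * Real.log n))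
      atTop (fun _ => (1 : ℝ)) := by
  rw [tendstoInMeasure_iff_dist]
  intro ε hε
  have hupper := tendsto_measure_mul_sqrt_two_log_le_biSup hmeas hlaw (a := 1 + ε) (by linarith)
  have hlower := tendsto_measure_biSup_le_mul_sqrt_two_log hmeas hindep hlaw
    (a := max (1 - ε) 0) (le_max_right _ _) (max_lt (by linarith) one_pos)
  have hsum := hupper.add hlower
  rw [add_zero] at hsum
  refine tendsto_of_tendsto_of_tendsto_of_le_of_le' tendsto_const_nhds hsum
    (Eventually.of_forall fun _ => zero_le) ?_
  filter_upwards [eventually_ge_atTop 2] with n hn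
  refine (measure_mono fun ω hω => ?_).trans (measure_union_le _ _)
  rw [mem_ofPred_eq, Real.dist_eq] at hω
  exact add_mul_le_or_le_max_mul_of_le_abs_div_sub_one (sqrt_two_log_natCast_pos hn) hω

theorem max_gaussian_ratio_tendsto_one_in_probability
    {Ω : Type*} [MeasurableSpace Ω] (μ : Measure Ω) [IsProbabilityMeasure μ]
    (ζ : ℕ → Ω → ℝ)
    (hmeas : ∀ i, Measurable (ζ i))
    (hindep : iIndepFun ζ μ)
    (hlaw : ∀ i, Measure.map (ζ i) μ = gaussianReal 0 1) :
    TendstoInMeasure μ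
      (fun n ω => (⨆ i ∈ Finset.Icc 1 n, ζ i ω) / Real.sqrt (2 * Real.log n))
      atTop (fun _ => (1 : ℝ)) :=
  max_gaussian_ratio_tendsto_one_in_probability_general μ ζ hmeas hindep hlaw
end

section
/- Suppose X and Y are real random variables (possibly on different probability spaces) such that X has a continuous (atomless) distribution and X ≥ Y in stochastic order (i.e., P(X ≤ x) ≤ P(Y ≤ x) for all x), and Z is a random variable defined on the same probability space as X. Then there exist random variables Y', Z' defined on one common probability space such that Y' has the same distribution as Y, Z' has the same distribution as Z, and X + Z ≥ Y' + Z' in stochastic order. -/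
/-!
If `X` has the continuous distribution function `F`, then `F(X)` is uniformly distributed on
`[0, 1]`, so `Y' := Q(F(X))`, where `Q` is the quantile function of `Y`, has the law of `Y`.
Since `F ≤ F_Y` pointwise, `Q(F(x)) ≤ x`, hence `Y' ≤ X` almost surely, and the pair
`(Y', Z)`, transported to `ℝ × ℝ`, gives `Y' + Z ≤ X + Z` almost surely.
-/

open MeasureTheory Set Filter Topology

namespace ProbabilityTheory

/-- For `u ≤ 0` the set is all of `ℝ` and for `u > 1` it is empty: in both cases `sInf` returns
the junk value `0`. -/
noncomputable def quantile (ρ : Measure ℝ) (u : ℝ) : ℝ := sInf {y | u ≤ cdf ρ y}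

section Quantile

variable (ρ : Measure ℝ) {u : ℝ}

lemma bddBelow_setOf_le_cdf (hu : 0 < u) : BddBelow {y | u ≤ cdf ρ y} := by
  obtain ⟨b, hb⟩ := eventually_atBot.1 ((tendsto_cdf_atBot ρ).eventually_lt_const hu)
  exact ⟨b, fun y hy => le_of_not_gt fun hyb => (hb y hyb.le).not_ge hy⟩

lemma le_cdf_quantile (hne : ∃ y, u ≤ cdf ρ y) : u ≤ cdf ρ (quantile ρ u) := by
  refine ge_of_tendsto (((cdf ρ).right_continuous _).mono Ioi_subset_Ici_self) ?_
  filter_upwards [self_mem_nhdsWithin] with y hy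
  obtain ⟨z, hz, hzy⟩ := exists_lt_of_csInf_lt hne hy
  exact le_trans hz (monotone_cdf ρ hzy.le)

lemma quantile_le_iff (hu : 0 < u) (hne : ∃ y, u ≤ cdf ρ y) {y : ℝ} :
    quantile ρ u ≤ y ↔ u ≤ cdf ρ y :=
  ⟨fun h => (le_cdf_quantile ρ hne).trans (monotone_cdf ρ h),
    fun h => csInf_le (bddBelow_setOf_le_cdf ρ hu) h⟩

lemma quantile_of_nonpos (hu : u ≤ 0) : quantile ρ u = 0 := by
  have : {y | u ≤ cdf ρ y} = univ := eq_univ_of_forall fun y => hu.trans (cdf_nonneg ρ y)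
  rw [quantile, this, Real.sInf_univ]

lemma measurable_quantile_comp {α : Type*} [MeasurableSpace α] {f : α → ℝ}
    (hf : Measurable f) (hne : ∀ a, ∃ y, f a ≤ cdf ρ y) :
    Measurable fun a => quantile ρ (f a) := by
  refine measurable_of_Iic fun y => ?_
  have : (fun a => quantile ρ (f a)) ⁻¹' Iic y =
      {a | 0 < f a ∧ f a ≤ cdf ρ y} ∪ {a | f a ≤ 0 ∧ 0 ≤ y} := by
    ext a
    rcases lt_or_ge 0 (f a) with h | h
    · simp [quantile_le_iff ρ h (hne a), h, h.not_ge]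
    · simp [quantile_of_nonpos ρ h, h, h.not_gt]
  rw [this]
  exact ((measurableSet_lt measurable_const hf).inter (measurableSet_le hf measurable_const)).union
    ((measurableSet_le hf measurable_const).inter (MeasurableSet.const _))

lemma measurable_quantile_comp_cdf {ν : Measure ℝ} (hle : ∀ t, cdf ν t ≤ cdf ρ t) :
    Measurable fun t => quantile ρ (cdf ν t) :=
  measurable_quantile_comp ρ (monotone_cdf ν).measurable fun t => ⟨t, hle t⟩

end Quantile

section NullSingleton

variable (ν : Measure ℝ) [IsProbabilityMeasure ν] [NullSingletonClass ν]

lemma continuous_cdf : Continuous (cdf ν) := by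
  refine continuous_iff_continuousAt.2 fun x => ?_
  rw [(monotone_cdf ν).continuousAt_iff_leftLim_eq_rightLim, (cdf ν).rightLim_eq]
  have h := (cdf ν).measure_singleton x
  rw [measure_cdf ν, measure_singleton, eq_comm, ENNReal.ofReal_eq_zero, sub_nonpos] at h
  exact le_antisymm ((monotone_cdf ν).leftLim_le le_rfl) h

lemma measure_setOf_cdf_le {c : ℝ} (hc0 : 0 ≤ c) (hc1 : c ≤ 1) :
    ν {t | cdf ν t ≤ c} = ENNReal.ofReal c := by
  obtain rfl | hc1 := hc1.eq_or_lt
  · simp [cdf_le_one]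
  set s := {t | cdf ν t ≤ c}
  obtain hs | hs := s.eq_empty_or_nonempty
  · have hc : c ≤ 0 := ge_of_tendsto (tendsto_cdf_atBot ν) <| Eventually.of_forall fun t =>
      (not_le.1 (eq_empty_iff_forall_notMem.1 hs t)).le
    rw [hs, measure_empty, le_antisymm hc hc0, ENNReal.ofReal_zero]
  have hbdd : BddAbove s := by
    obtain ⟨b, hb⟩ := eventually_atTop.1 ((tendsto_cdf_atTop ν).eventually_const_lt hc1)
    exact ⟨b, fun t ht => le_of_not_gt fun hbt => (hb t hbt.le).not_ge ht⟩
  have ha : sSup s ∈ s :=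
    (isClosed_le (continuous_cdf ν) continuous_const).csSup_mem hs hbdd
  have hsa : s = Iic (sSup s) :=
    Subset.antisymm (fun t ht => le_csSup hbdd ht) fun t ht => (monotone_cdf ν ht).trans ha
  have hFa : cdf ν (sSup s) = c := by
    refine le_antisymm ha (le_of_not_gt fun hlt => ?_)
    have : ∀ᶠ t in 𝓝[>] sSup s, cdf ν t < c :=
      (continuous_cdf ν).continuousWithinAt.eventually_lt_const hlt
    obtain ⟨t, ht, hat⟩ := (this.and self_mem_nhdsWithin).exists
    exact (not_le.2 hat) (le_csSup hbdd ht.le)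
  rw [hsa, ← ofReal_cdf, hFa]

lemma ae_cdf_pos : ∀ᵐ t ∂ν, 0 < cdf ν t := by
  simp only [ae_iff, not_lt]
  rw [measure_setOf_cdf_le ν le_rfl zero_le_one, ENNReal.ofReal_zero]

variable {ν} (ρ : Measure ℝ)

lemma ae_quantile_cdf_le (hle : ∀ t, cdf ν t ≤ cdf ρ t) :
    ∀ᵐ t ∂ν, quantile ρ (cdf ν t) ≤ t := by
  filter_upwards [ae_cdf_pos ν] with t ht
  exact (quantile_le_iff ρ ht ⟨t, hle t⟩).2 (hle t)

lemma map_quantile_comp_cdf [IsProbabilityMeasure ρ] (hle : ∀ t, cdf ν t ≤ cdf ρ t) :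
    ν.map (fun t => quantile ρ (cdf ν t)) = ρ := by
  have hT := measurable_quantile_comp_cdf ρ hle
  have := Measure.isProbabilityMeasure_map (μ := ν) hT.aemeasurable
  refine Measure.ext_of_Iic _ _ fun y => ?_
  rw [Measure.map_apply hT measurableSet_Iic, ← ofReal_cdf ρ y,
    ← measure_setOf_cdf_le ν (cdf_nonneg ρ y) (cdf_le_one ρ y)]
  refine measure_congr ?_
  filter_upwards [ae_cdf_pos ν] with t ht
  exact propext (quantile_le_iff ρ ht ⟨t, hle t⟩)

end NullSingleton

end ProbabilityTheory

open ProbabilityTheory in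
theorem stochastic_order_add_lemma
    {Ω Ω' : Type*} [MeasurableSpace Ω] [MeasurableSpace Ω']
    (μ : Measure Ω) [IsProbabilityMeasure μ]
    (μ' : Measure Ω') [IsProbabilityMeasure μ']
    (X Z : Ω → ℝ) (Y : Ω' → ℝ)
    (hX : Measurable X) (hZ : Measurable Z) (hY : Measurable Y)
    (hcont : ∀ x : ℝ, μ (X ⁻¹' {x}) = 0)
    (hst : ∀ x : ℝ, μ {ω | X ω ≤ x} ≤ μ' {ω | Y ω ≤ x}) :
    ∃ (Ω'' : Type) (_ : MeasurableSpace Ω'') (μ'' : Measure Ω'')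
      (_ : IsProbabilityMeasure μ'') (Y' Z' : Ω'' → ℝ),
      Measurable Y' ∧ Measurable Z' ∧
      Measure.map Y' μ'' = Measure.map Y μ' ∧
      Measure.map Z' μ'' = Measure.map Z μ ∧
      ∀ x : ℝ, μ {ω | X ω + Z ω ≤ x} ≤ μ'' {ω | Y' ω + Z' ω ≤ x} := by
  set ν := μ.map X
  set ρ := μ'.map Y
  have := Measure.isProbabilityMeasure_map (μ := μ) hX.aemeasurable
  have := Measure.isProbabilityMeasure_map (μ := μ') hY.aemeasurable
  have : NullSingletonClass ν :=
    ⟨fun x => by rw [Measure.map_apply hX (measurableSet_singleton x)]; exact hcont x⟩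
  have hle : ∀ t, cdf ν t ≤ cdf ρ t := fun t =>
    (ENNReal.ofReal_le_ofReal_iff (cdf_nonneg ρ t)).1 <| by
      rw [ofReal_cdf, ofReal_cdf, Measure.map_apply hX measurableSet_Iic,
        Measure.map_apply hY measurableSet_Iic]
      exact hst t
  set T := fun t => quantile ρ (cdf ν t)
  have hT : Measurable T := measurable_quantile_comp_cdf ρ hle
  have hP : Measurable fun ω => (T (X ω), Z ω) := (hT.comp hX).prodMk hZ
  refine ⟨ℝ × ℝ, inferInstance, μ.map fun ω => (T (X ω), Z ω),
    Measure.isProbabilityMeasure_map hP.aemeasurable, Prod.fst, Prod.snd,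
    measurable_fst, measurable_snd, ?_, ?_, fun x => ?_⟩
  · rw [Measure.map_map measurable_fst hP, ← map_quantile_comp_cdf ρ hle, Measure.map_map hT hX]
    rfl
  · rw [Measure.map_map measurable_snd hP]
    rfl
  · rw [Measure.map_apply hP (measurableSet_le (by fun_prop) measurable_const)]
    refine measure_mono_ae ?_
    filter_upwards [ae_of_ae_map hX.aemeasurable (ae_quantile_cdf_le ρ hle)] with ω hω hxz
    exact le_trans (add_le_add_left hω _) hxz
end
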